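/- arXiv:1310.0782 — 7 statements merged into one kernel-verified Lean document; each statement's English description precedes it below -/
import Mathlib

section
/- In the affine Lie algebra sl2-hat realized as C[t,t^{-1}]⊗sl2 ⊕ Cc ⊕ Cd with Chevalley generators e_0 = t⊗f, f_0 = t^{-1}⊗e, e_1 = 1⊗e, f_1 = 1⊗f, the elements B_0 = i(e_0 - f_0) and B_1 = i(e_1 - f_1) satisfy the Dolan–Grady relations [B_0,[B_0,[B_0,B_1]]] = 4[B_0,B_1] and [B_1,[B_1,[B_1,B_0]]] = 4[B_1,B_0]. -/
/-- The affine Lie algebra `sl2`-hat, encoded via its loop realization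
`ℂ[t,t⁻¹] ⊗ sl₂ ⊕ ℂc ⊕ ℂd`:  `E n = tⁿ ⊗ e`, `F n = tⁿ ⊗ f`, `H n = tⁿ ⊗ h`,
with the bracket `[tᵐ⊗x, tⁿ⊗y] = t^{m+n}⊗[x,y] + m δ_{m,-n}(x,y)c`, `[d, tⁿ⊗x] = n tⁿ⊗x`,
`c` central, where `(e,f)=1`, `(h,h)=2` and all other pairings of basis elements vanish. -/
structure AffineSl2 (L : Type*) [LieRing L] [LieAlgebra ℂ L] where
  E : ℤ → L
  F : ℤ → L
  H : ℤ → L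
  c : L
  d : L
  lie_EF : ∀ m n : ℤ, ⁅E m, F n⁆ = H (m + n) + (if m = -n then (m : ℂ) else 0) • c
  lie_HE : ∀ m n : ℤ, ⁅H m, E n⁆ = (2 : ℂ) • E (m + n)
  lie_HF : ∀ m n : ℤ, ⁅H m, F n⁆ = (-2 : ℂ) • F (m + n)
  lie_EE : ∀ m n : ℤ, ⁅E m, E n⁆ = 0
  lie_FF : ∀ m n : ℤ, ⁅F m, F n⁆ = 0
  lie_HH : ∀ m n : ℤ, ⁅H m, H n⁆ = (if m = -n then (2 * m : ℂ) else 0) • c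
  lie_dE : ∀ n : ℤ, ⁅d, E n⁆ = (n : ℂ) • E n
  lie_dF : ∀ n : ℤ, ⁅d, F n⁆ = (n : ℂ) • F n
  lie_dH : ∀ n : ℤ, ⁅d, H n⁆ = (n : ℂ) • H n
  lie_cx : ∀ x : L, ⁅c, x⁆ = 0

/-- With the Chevalley generators `e₀ = t⊗f = F 1`, `f₀ = t⁻¹⊗e = E (-1)`,
`e₁ = 1⊗e = E 0`, `f₁ = 1⊗f = F 0`, the elements `B₀ = i(e₀ - f₀)` and `B₁ = i(e₁ - f₁)`
satisfy the Dolan–Grady relations. -/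
theorem dolan_grady_relations {L : Type*} [LieRing L] [LieAlgebra ℂ L]
    (A : AffineSl2 L) (B₀ B₁ : L)
    (hB₀ : B₀ = Complex.I • (A.F 1 - A.E (-1)))
    (hB₁ : B₁ = Complex.I • (A.E 0 - A.F 0)) :
    ⁅B₀, ⁅B₀, ⁅B₀, B₁⁆⁆⁆ = (4 : ℂ) • ⁅B₀, B₁⁆ ∧
      ⁅B₁, ⁅B₁, ⁅B₁, B₀⁆⁆⁆ = (4 : ℂ) • ⁅B₁, B₀⁆ := by
  have lie_FE : ∀ m n : ℤ, ⁅A.F m, A.E n⁆ = -(A.H (n + m) + (if n = -m then (n : ℂ) else 0) • A.c) := by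
    intro m n; rw [← lie_skew, A.lie_EF]
  have lie_EH : ∀ m n : ℤ, ⁅A.E m, A.H n⁆ = -((2 : ℂ) • A.E (n + m)) := by
    intro m n; rw [← lie_skew, A.lie_HE]
  have lie_FH : ∀ m n : ℤ, ⁅A.F m, A.H n⁆ = -((-2 : ℂ) • A.F (n + m)) := by
    intro m n; rw [← lie_skew, A.lie_HF]
  have lie_xc : ∀ x : L, ⁅x, A.c⁆ = 0 := by
    intro x; rw [← lie_skew, A.lie_cx, neg_zero]
  subst hB₀ hB₁
  constructor <;>
  · simp only [smul_lie, lie_smul, sub_lie, lie_sub, lie_add, add_lie, lie_neg, neg_lie,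
      A.lie_EF, A.lie_HE, A.lie_HF, A.lie_EE, A.lie_FF, A.lie_HH, lie_FE, lie_EH, lie_FH,
      A.lie_cx, lie_xc, smul_add, smul_neg, smul_sub, smul_smul, smul_zero, zero_lie, lie_zero,
      neg_neg, sub_zero, zero_sub, Int.reduceNeg, Int.reduceAdd]
    norm_num [Complex.I_mul_I, mul_comm]
    match_scalars <;> (ring_nf; simp [Complex.I_sq]; try ring)
end

section
/- The elements A_n = 2i(t^n⊗e − t^{−n}⊗f) for n ∈ Z and G_n = t^n⊗h − t^{−n}⊗h for n ∈ N of the affine Lie algebra sl2-hat satisfy the Onsager algebra relations [A_n, A_m] = 4 G_{n−m}, [G_n, G_m] = 0, and [G_n, A_m] = 2 A_{n+m} − 2 A_{m−n}. -/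
/-- The elements `Aₙ = 2i(tⁿ⊗e − t⁻ⁿ⊗f)` (n ∈ ℤ) and `Gₙ = tⁿ⊗h − t⁻ⁿ⊗h` (n ∈ ℕ)
satisfy the Onsager algebra relations, where `G` is extended to `ℤ` by
`G₋ₖ = -Gₖ`, `G₀ = 0` (automatic from its definition). -/
theorem onsager_relations {L : Type*} [LieRing L] [LieAlgebra ℂ L]
    (𝔄 : AffineSl2 L) (A : ℤ → L) (G : ℤ → L)
    (hA : ∀ n : ℤ, A n = (2 * Complex.I) • (𝔄.E n - 𝔄.F (-n)))
    (hG : ∀ n : ℤ, G n = 𝔄.H n - 𝔄.H (-n)) :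
    (∀ n m : ℤ, ⁅A n, A m⁆ = (4 : ℂ) • G (n - m)) ∧
    (∀ n m : ℕ, 0 < n → 0 < m → ⁅G (n : ℤ), G (m : ℤ)⁆ = 0) ∧
    (∀ (n : ℕ) (m : ℤ), 0 < n →
      ⁅G (n : ℤ), A m⁆ = (2 : ℂ) • A ((n : ℤ) + m) - (2 : ℂ) • A (m - (n : ℤ))) := by
  have skew : ∀ x y : L, ⁅x, y⁆ = -⁅y, x⁆ := fun x y => (lie_skew x y).symm
  refine ⟨?_, ?_, ?_⟩
  · intro n m
    rw [hA, hA, hG]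
    rw [lie_smul, smul_lie, lie_sub, sub_lie, sub_lie,
      𝔄.lie_EE, 𝔄.lie_FF, 𝔄.lie_EF, skew (𝔄.F (-n)) (𝔄.E m), 𝔄.lie_EF]
    have h1 : n + -m = n - m := by ring
    have h2 : m + -n = -(n - m) := by ring
    rw [h1, h2]
    by_cases h : n = m
    · subst h
      simp only [neg_neg, if_pos rfl]
      match_scalars <;> first | linear_combination (4:ℂ) * Complex.I_sq | linear_combination (-4:ℂ) * Complex.I_sq | (simp only [if_true]; ring) | ring
    · have h' : ¬ (n = -(-m)) := by simpa using h
      have h'' : ¬ (m = -(-n)) := by simp; omega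
      rw [if_neg h', if_neg h'']
      match_scalars <;> first | linear_combination (4:ℂ) * Complex.I_sq | linear_combination (-4:ℂ) * Complex.I_sq | (simp only [if_true]; ring) | ring
  · intro n m hn hm
    rw [hG, hG]
    rw [lie_sub, sub_lie, sub_lie, 𝔄.lie_HH, 𝔄.lie_HH, 𝔄.lie_HH, 𝔄.lie_HH]
    have hn' : (0:ℤ) < (n:ℤ) := by exact_mod_cast hn
    have hm' : (0:ℤ) < (m:ℤ) := by exact_mod_cast hm
    push_cast
    split_ifs <;> first
      | module
      | (exfalso; omega)
  · intro n m _
    rw [hG, hA, hA, hA]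
    rw [lie_smul, lie_sub, sub_lie, sub_lie,
      𝔄.lie_HE, 𝔄.lie_HF, 𝔄.lie_HE, 𝔄.lie_HF]
    have e1 : (n:ℤ) + -m = n - m := by ring
    have e2 : -(n:ℤ) + m = m - n := by ring
    have e3 : -(n:ℤ) + -m = -((n:ℤ) + m) := by ring
    have e4 : -(m - (n:ℤ)) = (n:ℤ) - m := by ring
    rw [e1, e2, e3, e4]
    module
end

section
/- The fixed-point subalgebra of sl2-hat under the Chevalley involution θ̂ (given by θ̂(t^n⊗x) = t^{−n}⊗θ(x), θ̂(c) = −c, θ̂(d) = −d, where θ is the Chevalley involution of sl2 with θ(e)=−f, θ(f)=−e, θ(h)=−h) has vector space basis {A_n = 2i(t^n⊗e − t^{−n}⊗f) : n ∈ Z} ∪ {G_n = t^n⊗h − t^{−n}⊗h : n ∈ N}. -/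
section

variable {R K M ι : Type*}

theorem linearIndependent_of_dual [Ring R] [NoZeroDivisors R] [AddCommGroup M] [Module R M]
    {v : ι → M} (φ : ι → M →ₗ[R] R) (hself : ∀ i, φ i (v i) ≠ 0)
    (hother : ∀ i j, i ≠ j → φ j (v i) = 0) : LinearIndependent R v := by
  classical
  rw [linearIndependent_iff']
  intro s g hsum j hj
  have h := congrArg (φ j) hsum
  rw [map_sum, Finset.sum_eq_single j
    (fun i _ hij => by rw [map_smul, hother i j hij, smul_zero]) (fun h => absurd hj h),
    map_smul, map_zero, smul_eq_mul] at h
  exact (mul_eq_zero.mp h).resolve_right (hself j)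

theorem LinearMap.add_apply_mem_of_basis [Semiring R] [AddCommMonoid M] [Module R M]
    (θ : M →ₗ[R] M) (S : Submodule R M) (b : Module.Basis ι R M)
    (hb : ∀ i, b i + θ (b i) ∈ S) (x : M) : x + θ x ∈ S := by
  have hx : x ∈ Submodule.span R (Set.range b) := b.span_eq ▸ Submodule.mem_top
  induction hx using Submodule.span_induction with
  | mem _ h => obtain ⟨i, rfl⟩ := h; exact hb i
  | zero => simp
  | add y z _ _ hy hz => rw [map_add, add_add_add_comm]; exact S.add_mem hy hz
  | smul a y _ hy => rw [map_smul, ← smul_add]; exact S.smul_mem a hy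

theorem LinearMap.apply_eq_self_iff_mem [DivisionRing K] [NeZero (2 : K)] [AddCommMonoid M]
    [Module K M] (θ : M →ₗ[K] M) {S : Submodule K M} (hS : S ≤ LinearMap.eqLocus θ LinearMap.id)
    (hθS : ∀ x, x + θ x ∈ S) (x : M) : θ x = x ↔ x ∈ S := by
  refine ⟨fun hx => ?_, fun hx => hS hx⟩
  have := S.smul_mem (2⁻¹ : K) (hθS x)
  rwa [hx, ← two_smul K x, smul_smul, inv_mul_cancel₀ two_ne_zero, one_smul] at this

theorem Submodule.sub_apply_neg_mem_of_pos [Ring R] [AddCommGroup M] [Module R M]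
    (S : Submodule R M) (H : ℤ → M) (hpos : ∀ n : ℕ, 0 < n → H n - H (-n) ∈ S) (m : ℤ) :
    H m - H (-m) ∈ S := by
  obtain ⟨n, rfl | rfl⟩ := m.eq_nat_or_neg <;> obtain rfl | hn := n.eq_zero_or_pos
  · simp
  · exact hpos n hn
  · simp
  · rw [neg_neg, ← neg_sub]
    exact S.neg_mem (hpos n hn)

/-- With basis indices `(n, 0)`, `(n, 1)`, `(n, 2)` standing for `tⁿ⊗e`, `tⁿ⊗f`, `tⁿ⊗h` and
`a = 2i`, these are the `Aₙ` and `Gₙ`. -/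
noncomputable def Module.Basis.chevalleyFixedFamily [Ring R] [AddCommGroup M] [Module R M]
    (b : Module.Basis ((ℤ × Fin 3) ⊕ Fin 2) R M) (a : R) : ℤ ⊕ {n : ℕ // 0 < n} → M :=
  Sum.elim (fun n => a • (b (.inl (n, 0)) - b (.inl (-n, 1))))
    (fun n => b (.inl (n, 2)) - b (.inl (-n, 2)))

theorem Module.Basis.linearIndependent_chevalleyFixedFamily [Ring R] [NoZeroDivisors R]
    [AddCommGroup M] [Module R M] (b : Module.Basis ((ℤ × Fin 3) ⊕ Fin 2) R M) {a : R}
    (ha : a ≠ 0) : LinearIndependent R (b.chevalleyFixedFamily a) := by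
  have : Nontrivial R := ⟨⟨a, 0, ha⟩⟩
  refine linearIndependent_of_dual (Sum.elim (fun n => b.coord (.inl (n, 0)))
    (fun n => b.coord (.inl ((n : ℤ), 2)))) ?_ ?_
  · rintro (n | ⟨n, hn⟩)
    · simp [chevalleyFixedFamily, ha]
    · simp [chevalleyFixedFamily, hn.ne']
  · rintro (m | ⟨m, hm⟩) (n | ⟨n, _⟩) hmn
    · simp [chevalleyFixedFamily, Sum.inl_injective.ne_iff.mp hmn]
    · simp [chevalleyFixedFamily]
    · simp [chevalleyFixedFamily]
    · have hne : m ≠ n := fun h => hmn (by subst h; rfl)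
      simp [chevalleyFixedFamily, hm.ne', hne]

end

/-- The fixed-point subalgebra of `sl2`-hat under the Chevalley involution `θ̂`
(with `θ̂(tⁿ⊗e) = -t⁻ⁿ⊗f`, `θ̂(tⁿ⊗f) = -t⁻ⁿ⊗e`, `θ̂(tⁿ⊗h) = -t⁻ⁿ⊗h`,
`θ̂(c) = -c`, `θ̂(d) = -d`) has vector space basis
`{Aₙ = 2i(tⁿ⊗e − t⁻ⁿ⊗f) : n ∈ ℤ} ∪ {Gₙ = tⁿ⊗h − t⁻ⁿ⊗h : n ∈ ℕ, n ≥ 1}`: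
this family is linearly independent and spans the set of `θ̂`-fixed points. -/
theorem chevalley_fixed_points_basis {L : Type*} [LieRing L] [LieAlgebra ℂ L]
    (𝔄 : AffineSl2 L)
    (b : Module.Basis ((ℤ × Fin 3) ⊕ Fin 2) ℂ L)
    (hbE : ∀ n : ℤ, b (Sum.inl (n, 0)) = 𝔄.E n)
    (hbF : ∀ n : ℤ, b (Sum.inl (n, 1)) = 𝔄.F n)
    (hbH : ∀ n : ℤ, b (Sum.inl (n, 2)) = 𝔄.H n)
    (hbc : b (Sum.inr 0) = 𝔄.c) (hbd : b (Sum.inr 1) = 𝔄.d)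
    (θ : L →ₗ[ℂ] L)
    (hθE : ∀ n : ℤ, θ (𝔄.E n) = -𝔄.F (-n))
    (hθF : ∀ n : ℤ, θ (𝔄.F n) = -𝔄.E (-n))
    (hθH : ∀ n : ℤ, θ (𝔄.H n) = -𝔄.H (-n))
    (hθc : θ 𝔄.c = -𝔄.c) (hθd : θ 𝔄.d = -𝔄.d)
    (v : ℤ ⊕ {n : ℕ // 0 < n} → L)
    (hvA : ∀ n : ℤ, v (Sum.inl n) = (2 * Complex.I) • (𝔄.E n - 𝔄.F (-n)))
    (hvG : ∀ n : {n : ℕ // 0 < n}, v (Sum.inr n) = 𝔄.H (n : ℤ) - 𝔄.H (-(n : ℤ))) :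
    LinearIndependent ℂ v ∧
      (∀ x : L, θ x = x ↔ x ∈ Submodule.span ℂ (Set.range v)) := by
  set S := Submodule.span ℂ (Set.range v)
  have hA (n : ℤ) : 𝔄.E n - 𝔄.F (-n) ∈ S := by
    refine (S.smul_mem_iff (by simp : (2 * Complex.I : ℂ) ≠ 0)).mp ?_
    exact hvA n ▸ Submodule.subset_span (Set.mem_range_self (Sum.inl n))
  have hG (n : ℕ) (hn : 0 < n) : 𝔄.H n - 𝔄.H (-n) ∈ S :=
    hvG ⟨n, hn⟩ ▸ Submodule.subset_span
      (Set.mem_range_self (Sum.inr (⟨n, hn⟩ : {n : ℕ // 0 < n})))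
  have hfix : S ≤ LinearMap.eqLocus θ LinearMap.id := by
    refine Submodule.span_le.mpr ?_
    rintro _ ⟨n | n, rfl⟩
    · simp [hvA, hθE, hθF, smul_sub, neg_add_eq_sub]
    · simp [hvG, hθH, neg_add_eq_sub]
  have hb (i) : b i + θ (b i) ∈ S := by
    rcases i with ⟨n, k⟩ | k <;> fin_cases k
    · simpa [hbE, hθE, sub_eq_add_neg] using hA n
    · simpa [hbF, hθF, sub_eq_add_neg, add_comm] using S.neg_mem (hA (-n))
    · simpa [hbH, hθH, sub_eq_add_neg] using S.sub_apply_neg_mem_of_pos 𝔄.H hG n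
    · simp [hbc, hθc]
    · simp [hbd, hθd]
  have hv : v = b.chevalleyFixedFamily (2 * Complex.I) := by
    ext (n | n) <;> simp [Module.Basis.chevalleyFixedFamily, hvA, hvG, hbE, hbF, hbH]
  refine ⟨hv ▸ b.linearIndependent_chevalleyFixedFamily (by simp), ?_⟩
  exact θ.apply_eq_self_iff_mem hfix (θ.add_apply_mem_of_basis S b hb)
end

section
/- Let λ ∈ P⁺, a_j ∈ C, and let g_j ⊂ sl2-hat be the sl2-triple spanned by e_j, f_j, h_j (j = 0 or 1). Then the monic polynomial p_j(t) = ∏_{k=0}^{λ(h_j)} (t − λ(h_j) + 2k + a_j) of degree λ(h_j)+1 satisfies p_j(B_j − a_j)·v_λ = 0 for the highest weight vector v_λ ∈ V(λ), where B_j = i(e_j − f_j). Moreover p_j(0) = 0 if and only if a_j ∈ Z and λ(h_j) − |a_j| ∈ 2N_0. -/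
attribute [local instance 100] LieRing.ofAssociativeRing

open Polynomial Finset Module

section SemiconjBy

variable {R A : Type*} [CommRing R] [Ring A] [Algebra R A] {B G : A} {c : R}

lemma semiconjBy_sub_smul_one_of_lie_eq_smul (h : ⁅B, G⁆ = c • G) (μ : R) :
    SemiconjBy G (B - μ • 1) (B - (μ + c) • 1) := by
  rw [Ring.lie_def, sub_eq_iff_eq_add] at h
  simp only [SemiconjBy, mul_sub, sub_mul, add_mul, mul_smul_comm, smul_mul_assoc, mul_one,
    one_mul, add_smul, h]
  abel

lemma semiconjBy_pow_sub_smul_one_of_lie_eq_smul (h : ⁅B, G⁆ = c • G) (μ : R) (n : ℕ) :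
    SemiconjBy (G ^ n) (B - μ • 1) (B - (μ + n * c) • 1) := by
  induction n with
  | zero => simp
  | succ n ih =>
    have := (semiconjBy_sub_smul_one_of_lie_eq_smul h (μ + n * c)).mul_left ih
    rwa [← pow_succ', add_assoc, ← add_one_mul, ← Nat.cast_succ] at this

end SemiconjBy

namespace Module.End

section CommRing

variable {R M : Type*} [CommRing R] [AddCommGroup M] [Module R M] {B G : End R M} {c : R}

lemma apply_pow_apply_of_lie_eq_smul (h : ⁅B, G⁆ = c • G) {μ : R} {v : M}
    (hv : B v = μ • v) (n : ℕ) : B ((G ^ n) v) = (μ + n * c) • (G ^ n) v := by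
  have := congr($((semiconjBy_pow_sub_smul_one_of_lie_eq_smul h μ n).eq) v)
  simpa [hv, sub_eq_zero] using this.symm

lemma pow_apply_mem_maxGenEigenspace_of_lie_eq_smul (h : ⁅B, G⁆ = c • G) {μ : R} {x : M}
    (hx : x ∈ B.maxGenEigenspace μ) (n : ℕ) :
    (G ^ n) x ∈ B.maxGenEigenspace (μ + n * c) := by
  obtain ⟨k, hk⟩ := (B.mem_maxGenEigenspace μ x).mp hx
  refine (B.mem_maxGenEigenspace _ _).mpr ⟨k, ?_⟩
  rw [← mul_apply, ← ((semiconjBy_pow_sub_smul_one_of_lie_eq_smul h μ n).pow_right k).eq,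
    mul_apply, hk, map_zero]

lemma aeval_prod_X_sub_C_apply_of_lie_eq_smul (h : ⁅B, G⁆ = c • G) {μ d : R} {v : M}
    (hv : B v = μ • v + d • G v) (m : ℕ) :
    aeval B (∏ k ∈ range m, (X - C (μ + k * c))) v = d ^ m • (G ^ m) v := by
  induction m with
  | zero => simp
  | succ m ih =>
    have hG : (B - (μ + m * c) • 1) ((G ^ m) v) = (G ^ m) (d • G v) := by
      rw [← mul_apply, ← (semiconjBy_pow_sub_smul_one_of_lie_eq_smul h μ m).eq, mul_apply,
        LinearMap.sub_apply, hv]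
      simp
    rw [prod_range_succ_comm, map_mul, mul_apply, ih, map_smul, map_sub, aeval_X, aeval_C,
      algebraMap_end_eq_smul_id, ← one_eq_id, hG, map_smul, smul_smul, ← pow_succ, ← mul_apply,
      ← pow_succ]

end CommRing

section Field

variable {K V : Type*} [Field K] [AddCommGroup V] [Module K V] [FiniteDimensional K V]

lemma isNilpotent_of_lie_eq_smul [CharZero K] [IsAlgClosed K] {B G : End K V} {c : K}
    (hc : c ≠ 0) (h : ⁅B, G⁆ = c • G) : IsNilpotent G := by
  refine isNilpotent_iff_of_finite.mpr fun x ↦ ?_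
  have hx : x ∈ ⨆ μ, B.maxGenEigenspace μ := by simp [B.iSup_maxGenEigenspace_eq_top]
  induction hx using Submodule.iSup_induction' with
  | mem μ y hy =>
    obtain ⟨n, hn⟩ : ∃ n : ℕ, ¬ B.HasEigenvalue (μ + n * c) := by
      by_contra! hall
      refine Set.infinite_range_of_injective (fun m n hmn ↦ ?_)
        (B.finite_hasEigenvalue.subset (Set.range_subset_iff.mpr hall))
      simpa [hc] using hmn
    refine ⟨n, by_contra fun hne ↦ hn (HasUnifEigenvalue.lt (k := ⊤) zero_lt_one ?_)⟩
    exact (Submodule.ne_bot_iff _).mpr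
      ⟨_, pow_apply_mem_maxGenEigenspace_of_lie_eq_smul h hy n, hne⟩
  | zero => exact ⟨0, map_zero _⟩
  | add y z _ _ hy hz =>
    obtain ⟨m, hm⟩ := hy
    obtain ⟨n, hn⟩ := hz
    exact ⟨max m n, by rw [map_add, pow_map_zero_of_le le_sup_left hm,
      pow_map_zero_of_le le_sup_right hn, add_zero]⟩

lemma pow_finrank_eq_zero_of_isNilpotent {G : End K V} (hG : IsNilpotent G) :
    G ^ finrank K V = 0 := by
  simpa [hG.charpoly_eq_X_pow_finrank] using G.aeval_self_charpoly

end Field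

section Krylov

variable {R M : Type*} [CommRing R] [AddCommGroup M] [Module R M]

def krylovSubspace (F : End R M) (v : M) (n : ℕ) : Submodule R M :=
  Submodule.span R (Set.range fun k : Fin n ↦ (F ^ (k : ℕ)) v)

variable {F : End R M} {v : M} {n : ℕ}

instance : Module.Finite R (F.krylovSubspace v n) :=
  Module.Finite.span_of_finite R (Set.finite_range _)

lemma finrank_krylovSubspace_le [StrongRankCondition R] : finrank R (F.krylovSubspace v n) ≤ n :=
  (finrank_range_le_card (R := R) fun k : Fin n ↦ (F ^ (k : ℕ)) v).trans_eq (Fintype.card_fin n)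

lemma pow_apply_mem_krylovSubspace (hF : (F ^ n) v = 0) (k : ℕ) :
    (F ^ k) v ∈ F.krylovSubspace v n := by
  rcases lt_or_ge k n with hk | hk
  · exact Submodule.subset_span ⟨⟨k, hk⟩, rfl⟩
  · rw [← Nat.sub_add_cancel hk, pow_add, mul_apply, hF, map_zero]
    exact zero_mem _

lemma mapsTo_krylovSubspace {T : End R M} (hT : ∀ k < n, T ((F ^ k) v) ∈ F.krylovSubspace v n) :
    ∀ x ∈ F.krylovSubspace v n, T x ∈ F.krylovSubspace v n := by
  intro x hx
  refine (Submodule.span_le (p := (F.krylovSubspace v n).comap T)).mpr ?_ hx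
  rintro _ ⟨k, rfl⟩
  exact hT k k.2

lemma mapsTo_krylovSubspace_self (hF : (F ^ n) v = 0) :
    ∀ x ∈ F.krylovSubspace v n, F x ∈ F.krylovSubspace v n :=
  mapsTo_krylovSubspace fun k _ ↦ by
    rw [← mul_apply, ← pow_succ']
    exact pow_apply_mem_krylovSubspace hF _

lemma mapsTo_krylovSubspace_of_lie_eq_smul {H : End R M} {c μ : R} (h : ⁅H, F⁆ = c • F)
    (hv : H v = μ • v) : ∀ x ∈ F.krylovSubspace v n, H x ∈ F.krylovSubspace v n :=
  mapsTo_krylovSubspace fun k hk ↦ by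
    rw [apply_pow_apply_of_lie_eq_smul h hv]
    exact Submodule.smul_mem _ _ (Submodule.subset_span ⟨⟨k, hk⟩, rfl⟩)

end Krylov

end Module.End

/-- Unlike Mathlib's `IsSl2Triple`, this does not require `h ≠ 0`, which may fail for images under
a representation. -/
structure SatisfiesSl2Relations (R : Type*) {L : Type*} [CommRing R] [LieRing L]
    [LieAlgebra R L] (h e f : L) : Prop where
  lie_e_f : ⁅e, f⁆ = h
  lie_h_e : ⁅h, e⁆ = (2 : R) • e
  lie_h_f : ⁅h, f⁆ = (-2 : R) • f

namespace SatisfiesSl2Relations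

section LieAlgebra

variable {R L L' : Type*} [CommRing R] [LieRing L] [LieAlgebra R L] [LieRing L']
  [LieAlgebra R L'] {h e f : L}

lemma map (t : SatisfiesSl2Relations R h e f) (φ : L →ₗ⁅R⁆ L') :
    SatisfiesSl2Relations R (φ h) (φ e) (φ f) where
  lie_e_f := by rw [← φ.map_lie, t.lie_e_f]
  lie_h_e := by rw [← φ.map_lie, t.lie_h_e, map_smul]
  lie_h_f := by rw [← φ.map_lie, t.lie_h_f, map_smul]

lemma lie_cayley [LieAlgebra ℂ L] {h e f : L} (t : SatisfiesSl2Relations ℂ h e f) :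
    ⁅Complex.I • (e - f), e + f - Complex.I • h⁆ = (-2 : ℂ) • (e + f - Complex.I • h) := by
  simp only [lie_add, lie_sub, sub_lie, lie_smul, smul_lie, lie_self, ← lie_skew f e,
    ← lie_skew e h, ← lie_skew f h, t.lie_e_f, t.lie_h_e, t.lie_h_f]
  match_scalars <;> ring_nf <;> simp [Complex.I_sq]

end LieAlgebra

section Module

open Module.End

variable {R M : Type*} [CommRing R] [AddCommGroup M] [Module R M] {E F H : End R M} {μ : R}
  {v : M}

lemma apply_pow_succ_apply (t : SatisfiesSl2Relations R H E F) (hE : E v = 0)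
    (hH : H v = μ • v) (k : ℕ) : E ((F ^ (k + 1)) v) = ((k + 1) * (μ - k)) • (F ^ k) v := by
  have hEF : ∀ x, E (F x) = F (E x) + H x := fun x ↦ by
    rw [← t.lie_e_f, Ring.lie_def]
    simp
  induction k with
  | zero => simp [hEF, hE, hH]
  | succ k ih =>
    rw [pow_succ', mul_apply, hEF, ih, map_smul, ← mul_apply, ← pow_succ',
      apply_pow_apply_of_lie_eq_smul t.lie_h_f hH, ← add_smul]
    congr 1
    push_cast
    ring

lemma mapsTo_krylovSubspace (t : SatisfiesSl2Relations R H E F) (hE : E v = 0)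
    (hH : H v = μ • v) (n : ℕ) :
    ∀ x ∈ F.krylovSubspace v n, E x ∈ F.krylovSubspace v n :=
  Module.End.mapsTo_krylovSubspace fun k hk ↦ by
    rcases k with _ | k
    · simp [hE]
    · rw [t.apply_pow_succ_apply hE hH]
      exact Submodule.smul_mem _ _ (Submodule.subset_span ⟨⟨k, by omega⟩, rfl⟩)

end Module

section Complex

open Module.End Complex

variable {M : Type*} [AddCommGroup M] [Module ℂ M] {E F H : End ℂ M} {v : M}

lemma cayley_pow_apply_eq_zero (t : SatisfiesSl2Relations ℂ H E F) {N : ℕ} (hE : E v = 0)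
    (hH : H v = (N : ℂ) • v) (hF : (F ^ (N + 1)) v = 0) :
    ((E + F - I • H) ^ (N + 1)) v = 0 := by
  set W := F.krylovSubspace v (N + 1)
  have hEW := t.mapsTo_krylovSubspace hE hH (N + 1)
  have hFW := mapsTo_krylovSubspace_self hF
  have hHW := mapsTo_krylovSubspace_of_lie_eq_smul (n := N + 1) t.lie_h_f hH
  have hBW : ∀ x ∈ W, (I • (E - F)) x ∈ W := fun x hx ↦
    W.smul_mem _ (W.sub_mem (hEW x hx) (hFW x hx))
  have hGW : ∀ x ∈ W, (E + F - I • H) x ∈ W := fun x hx ↦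
    W.sub_mem (W.add_mem (hEW x hx) (hFW x hx)) (W.smul_mem _ (hHW x hx))
  have hnil : IsNilpotent ((E + F - I • H).restrict hGW) := by
    refine isNilpotent_of_lie_eq_smul (B := (I • (E - F)).restrict hBW) (c := -2)
      (by norm_num) ?_
    ext x
    simpa [Ring.lie_def] using congr($(t.lie_cayley) x)
  have hzero : (E + F - I • H).restrict hGW ^ (N + 1) = 0 :=
    pow_eq_zero_of_le finrank_krylovSubspace_le (pow_finrank_eq_zero_of_isNilpotent hnil)
  have hv : v ∈ W := by simpa using pow_apply_mem_krylovSubspace hF 0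
  have := congr($(hzero) ⟨v, hv⟩)
  rw [pow_restrict, LinearMap.restrict_apply] at this
  exact congr($(this).val)

end Complex

end SatisfiesSl2Relations

namespace AffineSl2

variable {L : Type*} [LieRing L] [LieAlgebra ℂ L] (𝔄 : AffineSl2 L)

lemma satisfiesSl2Relations_zero :
    SatisfiesSl2Relations ℂ (𝔄.c - 𝔄.H 0) (𝔄.F 1) (𝔄.E (-1)) where
  lie_e_f := by
    rw [← lie_skew, 𝔄.lie_EF]
    norm_num
    abel
  lie_h_e := by simp [sub_lie, 𝔄.lie_cx, 𝔄.lie_HF]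
  lie_h_f := by simp [sub_lie, 𝔄.lie_cx, 𝔄.lie_HE]

lemma satisfiesSl2Relations_one : SatisfiesSl2Relations ℂ (𝔄.H 0) (𝔄.E 0) (𝔄.F 0) where
  lie_e_f := by simp [𝔄.lie_EF]
  lie_h_e := by simp [𝔄.lie_HE]
  lie_h_f := by simp [𝔄.lie_HF]

end AffineSl2

lemma exists_natCast_sub_two_mul_eq_iff (N : ℕ) (z : ℤ) :
    (∃ k ≤ N, (N : ℤ) - 2 * k = z) ↔ ∃ m : ℕ, (N : ℤ) = |z| + 2 * m := by
  constructor
  · rintro ⟨k, hk, rfl⟩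
    rcases le_total (2 * k) N with h | h
    · exact ⟨k, by rw [abs_of_nonneg (by omega)]; ring⟩
    · exact ⟨N - k, by rw [abs_of_nonpos (by omega)]; omega⟩
  · rintro ⟨m, hm⟩
    rcases abs_cases z with ⟨hz, hz0⟩ | ⟨hz, hz0⟩ <;> rw [hz] at hm
    · exact ⟨m, by omega, by omega⟩
    · exact ⟨m + z.natAbs, by omega, by omega⟩

lemma exists_eq_natCast_sub_two_mul_iff (N : ℕ) (a : ℂ) :
    (∃ k ≤ N, (N : ℂ) - 2 * k = a) ↔ ∃ z : ℤ, a = z ∧ ∃ m : ℕ, (N : ℤ) = |z| + 2 * m := by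
  simp_rw [← exists_natCast_sub_two_mul_eq_iff]
  constructor
  · rintro ⟨k, hk, rfl⟩
    exact ⟨N - 2 * k, by push_cast; ring, k, hk, rfl⟩
  · rintro ⟨z, rfl, k, hk, rfl⟩
    exact ⟨k, hk, by push_cast; ring⟩

/-- Let `V(λ)` be an integrable highest weight module (given by an action `ρ` of
`sl2`-hat on `M` and a highest weight vector `v` with `e_j v = 0`, `h_j v = λ(h_j)v`,
`f_j^{λ(h_j)+1} v = 0`).  Then the monic polynomial
`p_j(t) = ∏_{k=0}^{λ(h_j)} (t − λ(h_j) + 2k + a_j)` of degree `λ(h_j)+1` satisfies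
`p_j(B_j − a_j)·v = 0`, where `B_j = i(e_j − f_j)`.  Moreover `p_j(0) = 0` iff
`a_j ∈ ℤ` and `λ(h_j) − |a_j| ∈ 2ℕ₀`.  (Here `j : Fin 2`, with
`e₀ = F 1, f₀ = E (−1), h₀ = c − H 0` and `e₁ = E 0, f₁ = F 0, h₁ = H 0`.) -/
theorem annihilating_polynomial {L M : Type*} [LieRing L] [LieAlgebra ℂ L]
    [AddCommGroup M] [Module ℂ M]
    (𝔄 : AffineSl2 L) (ρ : L →ₗ⁅ℂ⁆ Module.End ℂ M)
    (j : Fin 2) (ej fj hj : L)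
    (hej : ej = if j = 0 then 𝔄.F 1 else 𝔄.E 0)
    (hfj : fj = if j = 0 then 𝔄.E (-1) else 𝔄.F 0)
    (hhj : hj = if j = 0 then 𝔄.c - 𝔄.H 0 else 𝔄.H 0)
    (N : ℕ)                 -- `N = λ(h_j)`
    (a : ℂ) (v : M)
    (hhw : ρ ej v = 0)
    (hwt : ρ hj v = (N : ℂ) • v)
    (hint : ((ρ fj) ^ (N + 1)) v = 0)
    (p : Polynomial ℂ)
    (hp : p = ∏ k ∈ Finset.range (N + 1),
      (Polynomial.X - Polynomial.C ((N : ℂ) - 2 * k - a))) :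
    (Polynomial.aeval (ρ (Complex.I • (ej - fj)) - a • (1 : Module.End ℂ M)) p) v = 0
      ∧ (p.eval 0 = 0 ↔ ∃ z : ℤ, a = (z : ℂ) ∧ ∃ m : ℕ, (N : ℤ) = |z| + 2 * m) := by
  have t : SatisfiesSl2Relations ℂ (ρ hj) (ρ ej) (ρ fj) := by
    refine SatisfiesSl2Relations.map ?_ ρ
    subst hej hfj hhj
    fin_cases j
    exacts [𝔄.satisfiesSl2Relations_zero, 𝔄.satisfiesSl2Relations_one]
  rw [map_smul, map_sub]
  set G := ρ ej + ρ fj - Complex.I • ρ hj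
  set T := Complex.I • (ρ ej - ρ fj) - a • (1 : Module.End ℂ M)
  have hTG : ⁅T, G⁆ = (-2 : ℂ) • G := by
    rw [sub_lie, t.lie_cayley, smul_lie, (Commute.one_left G).lie_eq, smul_zero, sub_zero]
  have hTv : T v = ((N : ℂ) - a) • v + (-Complex.I) • G v := by
    simp only [T, G, LinearMap.sub_apply, LinearMap.add_apply, LinearMap.smul_apply,
      Module.End.one_apply, hhw, hwt]
    match_scalars <;> ring_nf
    simp [Complex.I_sq]
  refine ⟨?_, ?_⟩
  · have hp' : p = ∏ k ∈ range (N + 1), (X - C (((N : ℂ) - a) + k * (-2))) :=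
      hp.trans (prod_congr rfl fun k _ ↦ by ring_nf)
    rw [hp', Module.End.aeval_prod_X_sub_C_apply_of_lie_eq_smul hTG hTv,
      t.cayley_pow_apply_eq_zero hhw hwt hint, smul_zero]
  · rw [← exists_eq_natCast_sub_two_mul_iff, hp, eval_prod, prod_eq_zero_iff]
    simp only [eval_sub, eval_X, eval_C, mem_range, Nat.lt_succ_iff, zero_sub, neg_eq_zero,
      sub_eq_zero]
end

section
/- Let A_K^W denote the space of W-invariant elements of level K in the Looijenga algebra A (W-invariant elements of the completed group algebra of the affine sl2 weight lattice that remain in the completion after every Weyl group element is applied). If K < 0 then A_K^W = {0}. Moreover A_0^W = { Σ_{n ≤ n_0} a_n e^{nδ} : a_n ∈ C, n_0 ∈ N }, and A_0^W is a field. -/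
open scoped Classical

/-- The weight lattice `P ≅ ℤ³` via `λ ↦ (λ(h₀), λ(h₁), λ(d))`; simple reflection
`s_{α₀}(λ) = λ − λ(h₀)α₀`, `α₀ = (2,−2,1)`. -/
def s0z : ℤ × ℤ × ℤ → ℤ × ℤ × ℤ := fun p => (-p.1, p.2.1 + 2 * p.1, p.2.2 - p.1)

/-- Simple reflection `s_{α₁}(λ) = λ − λ(h₁)α₁`, `α₁ = (−2,2,0)`. -/
def s1z : ℤ × ℤ × ℤ → ℤ × ℤ × ℤ := fun p => (p.1 + 2 * p.2.1, -p.2.1, p.2.2)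

lemma s0z_involutive : Function.Involutive s0z := by
  rintro ⟨x, y, z⟩; simp only [s0z, Prod.mk.injEq]; refine ⟨by ring, by ring, by ring⟩

lemma s1z_involutive : Function.Involutive s1z := by
  rintro ⟨x, y, z⟩; simp only [s1z, Prod.mk.injEq]; refine ⟨by ring, by ring, by first | ring | trivial⟩

/-- The affine Weyl group of `sl2`-hat, acting on the weight lattice. -/
def Wz : Subgroup (Equiv.Perm (ℤ × ℤ × ℤ)) :=
  Subgroup.closure {s0z_involutive.toPerm, s1z_involutive.toPerm}

/-- Twice the `ρ`-pairing: `2(λ,ρ) = λ(h₁) + 4λ(d)` for `λ = (λ(h₀), λ(h₁), λ(d))`,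
where `ρ = ϖ₀ + ϖ₁`. -/
def rhoPair (v : ℤ × ℤ × ℤ) : ℤ := v.2.1 + 4 * v.2.2

/-- Membership in the completion `C̄[P_K]`: a formal sum `Σ_{λ∈P_K} f(λ) eᵠ` supported
on level `K`, such that for every `N ∈ ℤ` only finitely many `λ` in the support have
`(λ,ρ) ≥ N`. -/
def InCbar (K : ℤ) (f : ℤ × ℤ × ℤ → ℂ) : Prop :=
  (∀ v, f v ≠ 0 → v.1 + v.2.1 = K) ∧
  ∀ N : ℤ, {v : ℤ × ℤ × ℤ | f v ≠ 0 ∧ N ≤ rhoPair v}.Finite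

/-- Membership in the Looijenga space `A_K = ⋂_{w∈W} w(C̄[P_K])`. -/
def InA (K : ℤ) (f : ℤ × ℤ × ℤ → ℂ) : Prop :=
  ∀ w ∈ Wz, InCbar K (fun v => f (w v))

/-- Membership in `A_K^W`: `W`-invariant elements of `A_K` (invariance under the two
generating reflections suffices). -/
def InAW (K : ℤ) (f : ℤ × ℤ × ℤ → ℂ) : Prop :=
  InA K f ∧ (∀ v, f (s0z v) = f v) ∧ (∀ v, f (s1z v) = f v)

/-- The convolution product of formal sums: `(f⋆g)(v) = Σ_u f(u)g(v-u)`. -/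
noncomputable def conv (f g : ℤ × ℤ × ℤ → ℂ) : ℤ × ℤ × ℤ → ℂ :=
  fun v => ∑ᶠ u : ℤ × ℤ × ℤ, f u * g (v - u)

/-!
The element `t = s₁s₀` of `W` acts on weights of level `K` as a translation, and along a
`t`-orbit the `ρ`-pairing grows quadratically in `n` when `K < 0`, and linearly when `K = 0`
and `λ(h₀) ≠ 0`. On the support of an element of `C̄[P_K]` the `ρ`-pairing is bounded above,
while the support of a `W`-invariant element is `t`-stable. Hence `A_K^W = 0` for `K < 0`, and
elements of `A_0^W` are supported on `{nδ : n ≤ n₀}`. Such series are exactly the Laurent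
series in `q = e^{-δ}`, and convolution becomes the product of `ℂ((q))`, so `A_0^W` is a field.
-/

open Function

theorem HahnSeries.coeff_mul_eq_finsum {Γ R : Type*} [AddCommGroup Γ] [PartialOrder Γ]
    [IsOrderedCancelAddMonoid Γ] [NonUnitalNonAssocSemiring R] (x y : HahnSeries Γ R) (a : Γ) :
    (x * y).coeff a = ∑ᶠ i, x.coeff i * y.coeff (a - i) := by
  classical
  set A := Finset.antidiagonal x.isPWO_support y.isPWO_support a
  have hsupp : Function.support (fun i => x.coeff i * y.coeff (a - i)) ⊆
      (A.image Prod.fst : Set Γ) := by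
    intro i hi
    refine Finset.mem_image.2 ⟨(i, a - i), ?_, rfl⟩
    simp only [A, Finset.mem_antidiagonal, HahnSeries.mem_support, add_sub_cancel]
    exact ⟨left_ne_zero_of_mul hi, right_ne_zero_of_mul hi, trivial⟩
  have hsnd : ∀ ij ∈ A, ij.2 = a - ij.1 := fun ij hij => by
    rw [← (Finset.mem_antidiagonal.1 hij).2.2, add_sub_cancel_left]
  rw [coeff_mul, finsum_eq_sum_of_support_subset _ hsupp, Finset.sum_image]
  · exact Finset.sum_congr rfl fun ij hij => by rw [hsnd ij hij]
  · intro ij hij kl hkl h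
    exact Prod.ext h (by rw [hsnd ij hij, hsnd kl hkl, h])

lemma apply_eq_of_involutive_of_fixes_support {α M : Type*} [Zero M] {f : α → M} {s : α → α}
    (hs : Involutive s) (hfix : ∀ v, f v ≠ 0 → s v = v) (v : α) : f (s v) = f v := by
  by_cases hv : f v = 0
  · by_cases hsv : f (s v) = 0
    · rw [hv, hsv]
    · have := hfix _ hsv
      rw [hs v] at this
      rw [← this]
  · rw [hfix v hv]

section WeylInvariance

variable {α : Type*} {f : ℤ × ℤ × ℤ → α}

lemma apply_eq_of_mem_Wz (h0 : ∀ v, f (s0z v) = f v) (h1 : ∀ v, f (s1z v) = f v)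
    {w : Equiv.Perm (ℤ × ℤ × ℤ)} (hw : w ∈ Wz) (v : ℤ × ℤ × ℤ) : f (w v) = f v := by
  induction hw using Subgroup.closure_induction generalizing v with
  | mem w hw =>
    rcases hw with rfl | rfl
    · exact h0 v
    · exact h1 v
  | one => rfl
  | mul a b _ _ ha hb => rw [Equiv.Perm.mul_apply, ha, hb]
  | inv a _ ha => rw [← ha (a⁻¹ v), ← Equiv.Perm.mul_apply, mul_inv_cancel, Equiv.Perm.one_apply]

def translation : ℤ × ℤ × ℤ → ℤ × ℤ × ℤ := s1z ∘ s0z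

lemma translation_iterate (x y z : ℤ) (n : ℕ) :
    translation^[n] (x, y, z) =
      (x + 2 * n * (x + y), y - 2 * n * (x + y), z - n * x - n * (n - 1) * (x + y)) := by
  induction n with
  | zero => simp
  | succ n ih =>
    rw [iterate_succ_apply', ih]
    simp only [translation, comp_apply, s0z, s1z, Prod.mk.injEq]
    push_cast
    refine ⟨by ring, by ring, by ring⟩

lemma apply_translation_iterate (h0 : ∀ v, f (s0z v) = f v) (h1 : ∀ v, f (s1z v) = f v)
    (n : ℕ) (v : ℤ × ℤ × ℤ) : f (translation^[n] v) = f v := by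
  induction n with
  | zero => rfl
  | succ n ih => rw [iterate_succ_apply', translation, comp_apply, h1, h0, ← translation, ih]

end WeylInvariance

section Invariants

variable {K : ℤ} {f : ℤ × ℤ × ℤ → ℂ}

lemma inAW_iff :
    InAW K f ↔ InCbar K f ∧ (∀ v, f (s0z v) = f v) ∧ (∀ v, f (s1z v) = f v) := by
  refine ⟨fun ⟨hA, h0, h1⟩ => ⟨by simpa using hA 1 (one_mem _), h0, h1⟩,
    fun ⟨hC, h0, h1⟩ => ⟨fun w hw => ?_, h0, h1⟩⟩
  simpa only [apply_eq_of_mem_Wz h0 h1 hw] using hC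

lemma InCbar.bddAbove_rhoPair (hf : InCbar K f) : BddAbove (rhoPair '' {v | f v ≠ 0}) := by
  obtain ⟨B, hB⟩ := ((hf.2 0).image rhoPair).bddAbove
  refine ⟨max B 0, ?_⟩
  rintro _ ⟨v, hv, rfl⟩
  rcases le_or_gt 0 (rhoPair v) with h | h
  · exact (hB ⟨v, ⟨hv, h⟩, rfl⟩).trans (le_max_left _ _)
  · exact h.le.trans (le_max_right _ _)

lemma InAW.not_forall_le_rhoPair_translation_iterate (hf : InAW K f) {v : ℤ × ℤ × ℤ}
    (hv : f v ≠ 0) (C : ℤ) : ¬ ∀ n : ℕ, n + C ≤ rhoPair (translation^[n] v) := by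
  obtain ⟨hC, h0, h1⟩ := inAW_iff.1 hf
  obtain ⟨B, hB⟩ := hC.bddAbove_rhoPair
  intro hgrowth
  set n := (B - C + 1).toNat
  have hle : rhoPair (translation^[n] v) ≤ B :=
    hB ⟨_, show f (translation^[n] v) ≠ 0 by rwa [apply_translation_iterate h0 h1], rfl⟩
  have := hgrowth n
  omega

lemma eq_zero_of_level_neg (hK : K < 0) (hf : InAW K f) : f = 0 := by
  funext ⟨x, y, z⟩
  by_contra hv
  have hlevel : x + y = K := (inAW_iff.1 hf).1.1 _ hv
  refine hf.not_forall_le_rhoPair_translation_iterate hv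
    (y + 4 * z - (2 * K - 4 * x - 1) ^ 2) fun n => ?_
  -- `rhoPair (tⁿ v) = -4K n² + (2K - 4x) n + rhoPair v` with `-4K ≥ 4`.
  rw [translation_iterate, rhoPair, hlevel]
  have hn : (0 : ℤ) ≤ n := n.cast_nonneg
  nlinarith [sq_nonneg (8 * (n : ℤ) + (2 * K - 4 * x - 1)),
    mul_nonneg (by omega : (0 : ℤ) ≤ -4 * K - 4) (sq_nonneg (n : ℤ))]

lemma InAW.fst_nonneg (hf : InAW 0 f) {x z : ℤ} (hv : f (x, -x, z) ≠ 0) : 0 ≤ x := by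
  by_contra! hx
  refine hf.not_forall_le_rhoPair_translation_iterate hv (-x + 4 * z) fun n => ?_
  rw [translation_iterate, rhoPair]
  have hn : (0 : ℤ) ≤ n := n.cast_nonneg
  nlinarith

lemma InAW.fst_eq_zero_and_snd_eq_zero (hf : InAW 0 f) {v : ℤ × ℤ × ℤ} (hv : f v ≠ 0) :
    v.1 = 0 ∧ v.2.1 = 0 := by
  obtain ⟨x, y, z⟩ := v
  obtain rfl : y = -x := by have : x + y = 0 := (inAW_iff.1 hf).1.1 _ hv; omega
  have hs0 : s0z (x, -x, z) = (-x, -(-x), z - x) := by simp only [s0z]; ring_nf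
  have hx := hf.fst_nonneg hv
  have hx' := hf.fst_nonneg (z := z - x) (by rwa [← hs0, (inAW_iff.1 hf).2.1])
  exact ⟨by omega, by simp only; omega⟩

-- `f = Σ_{n ≤ n₀} aₙ e^{nδ}`, where `δ = (0, 0, 1)`.
def IsDeltaSeries (n₀ : ℤ) (f : ℤ × ℤ × ℤ → ℂ) : Prop :=
  ∀ v, f v ≠ 0 → v.1 = 0 ∧ v.2.1 = 0 ∧ v.2.2 ≤ n₀

lemma InAW.exists_isDeltaSeries (hf : InAW 0 f) : ∃ n₀, IsDeltaSeries n₀ f := by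
  obtain ⟨B, hB⟩ := (inAW_iff.1 hf).1.bddAbove_rhoPair
  refine ⟨max B 0, fun v hv => ?_⟩
  obtain ⟨h1, h2⟩ := hf.fst_eq_zero_and_snd_eq_zero hv
  have : rhoPair v ≤ B := hB ⟨v, hv, rfl⟩
  simp only [rhoPair, h2] at this
  exact ⟨h1, h2, by omega⟩

lemma IsDeltaSeries.inAW {n₀ : ℤ} (hf : IsDeltaSeries n₀ f) : InAW 0 f := by
  have hfix {s : ℤ × ℤ × ℤ → ℤ × ℤ × ℤ} (hs : ∀ v, v.1 = 0 → v.2.1 = 0 → s v = v) :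
      ∀ v, f v ≠ 0 → s v = v := fun v hv => hs v (hf v hv).1 (hf v hv).2.1
  refine inAW_iff.2 ⟨⟨fun v hv => by simp [(hf v hv).1, (hf v hv).2.1], fun N => ?_⟩,
    apply_eq_of_involutive_of_fixes_support s0z_involutive
      (hfix fun ⟨x, y, z⟩ hx hy => by simp_all [s0z]),
    apply_eq_of_involutive_of_fixes_support s1z_involutive
      (hfix fun ⟨x, y, z⟩ hx hy => by simp_all [s1z])⟩
  refine ((Set.finite_Icc (-|N|) n₀).image fun z => ((0 : ℤ), (0 : ℤ), z)).subset ?_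
  rintro ⟨x, y, z⟩ ⟨hv, hN⟩
  obtain ⟨rfl, rfl, hz⟩ := hf _ hv
  simp only [rhoPair] at hN
  exact ⟨z, ⟨by cases abs_cases N <;> omega, hz⟩, rfl⟩

lemma inAW_zero_iff : InAW 0 f ↔ ∃ n₀, IsDeltaSeries n₀ f :=
  ⟨InAW.exists_isDeltaSeries, fun ⟨_, hf⟩ => hf.inAW⟩

-- The Laurent series `Σ xₙ qⁿ` in `q = e^{-δ}`, as a formal sum on the weight lattice.
def ofLaurent (x : HahnSeries ℤ ℂ) : ℤ × ℤ × ℤ → ℂ :=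
  fun v => if v.1 = 0 ∧ v.2.1 = 0 then x.coeff (-v.2.2) else 0

lemma isDeltaSeries_ofLaurent (x : HahnSeries ℤ ℂ) : IsDeltaSeries (-x.order) (ofLaurent x) := by
  intro v hv
  simp only [ofLaurent] at hv
  split_ifs at hv with h
  · exact ⟨h.1, h.2, by have := HahnSeries.order_le_of_coeff_ne_zero hv; omega⟩
  · exact absurd rfl hv

lemma IsDeltaSeries.exists_eq_ofLaurent {n₀ : ℤ} (hf : IsDeltaSeries n₀ f) :
    ∃ x, f = ofLaurent x := by
  have hbdd : BddBelow (support fun n : ℤ => f (0, 0, -n)) :=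
    ⟨-n₀, fun n hn => by have := (hf (0, 0, -n) hn).2.2; dsimp only at this; omega⟩
  refine ⟨HahnSeries.ofSuppBddBelow _ hbdd, funext fun ⟨a, b, c⟩ => ?_⟩
  simp only [ofLaurent, HahnSeries.coeff_ofSuppBddBelow, neg_neg]
  split_ifs with h
  · rw [h.1, h.2]
  · by_contra hv
    exact h ⟨(hf _ hv).1, (hf _ hv).2.1⟩

lemma inAW_zero_iff_exists_eq_ofLaurent : InAW 0 f ↔ ∃ x, f = ofLaurent x := by
  rw [inAW_zero_iff]
  constructor
  · rintro ⟨_, hf⟩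
    exact hf.exists_eq_ofLaurent
  · rintro ⟨x, rfl⟩
    exact ⟨_, isDeltaSeries_ofLaurent x⟩

lemma conv_ofLaurent (x y : HahnSeries ℤ ℂ) :
    conv (ofLaurent x) (ofLaurent y) = ofLaurent (x * y) := by
  funext ⟨a, b, m⟩
  have hline {u : ℤ × ℤ × ℤ} (hu : ofLaurent x u * ofLaurent y ((a, b, m) - u) ≠ 0) :
      u.1 = 0 ∧ u.2.1 = 0 ∧ a - u.1 = 0 ∧ b - u.2.1 = 0 := by
    obtain ⟨h₁, h₂, -⟩ := isDeltaSeries_ofLaurent x u (left_ne_zero_of_mul hu)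
    obtain ⟨h₃, h₄, -⟩ := isDeltaSeries_ofLaurent y _ (right_ne_zero_of_mul hu)
    exact ⟨h₁, h₂, h₃, h₄⟩
  unfold conv
  by_cases hab : a = 0 ∧ b = 0
  · obtain ⟨rfl, rfl⟩ := hab
    set e : ℤ → ℤ × ℤ × ℤ := fun i => (0, 0, -i)
    have he : Injective e := fun i j h => neg_injective (congrArg (·.2.2) h)
    have hsupp : Set.univ ∩ support (fun u => ofLaurent x u * ofLaurent y ((0, 0, m) - u)) =
        Set.range e ∩ support (fun u => ofLaurent x u * ofLaurent y ((0, 0, m) - u)) := by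
      refine Set.ext fun u => ⟨fun ⟨_, hu⟩ => ⟨⟨-u.2.2, ?_⟩, hu⟩, fun ⟨_, hu⟩ => ⟨trivial, hu⟩⟩
      obtain ⟨h₁, h₂, -⟩ := hline hu
      simp only [e, neg_neg]
      exact Prod.ext h₁.symm (Prod.ext h₂.symm rfl)
    rw [← finsum_mem_univ, finsum_mem_inter_support_eq _ _ _ hsupp, finsum_mem_range he,
      ofLaurent, if_pos ⟨rfl, rfl⟩, HahnSeries.coeff_mul_eq_finsum]
    refine finsum_congr fun i => ?_
    simp only [e, ofLaurent, Prod.mk_sub_mk, sub_zero, sub_neg_eq_add, neg_neg, true_and, if_true]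
    congr 2
    ring
  · rw [ofLaurent, if_neg hab]
    refine finsum_eq_zero_of_forall_eq_zero fun u => ?_
    by_contra hu
    obtain ⟨h₁, h₂, h₃, h₄⟩ := hline hu
    exact hab ⟨by omega, by omega⟩

lemma ofLaurent_one : ofLaurent 1 = fun v => if v = 0 then 1 else 0 := by
  funext ⟨a, b, c⟩
  simp only [ofLaurent, HahnSeries.coeff_one, neg_eq_zero, Prod.mk_eq_zero]
  by_cases h : a = 0 ∧ b = 0
  · simp [h]
  · rw [if_neg h, if_neg (fun h' => h ⟨h'.1, h'.2.1⟩)]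

end Invariants

/-- If `K < 0` then `A_K^W = 0`; `A_0^W` consists precisely of the series
`Σ_{n ≤ n₀} aₙ e^{nδ}` (with `δ = (0,0,1)`), and `A_0^W` is a field: it is closed
under the convolution product and every nonzero element has an inverse. -/
theorem level_zero_invariants :
    (∀ K : ℤ, K < 0 → ∀ f, InAW K f → f = 0) ∧
    (∀ f, InAW 0 f ↔
      ∃ n₀ : ℤ, ∀ v, f v ≠ 0 → v.1 = 0 ∧ v.2.1 = 0 ∧ v.2.2 ≤ n₀) ∧
    (∀ f g, InAW 0 f → InAW 0 g → InAW 0 (conv f g)) ∧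
    (∀ f, InAW 0 f → f ≠ 0 →
      ∃ g, InAW 0 g ∧ conv f g = fun v => if v = 0 then (1 : ℂ) else 0) := by
  refine ⟨fun K hK f hf => eq_zero_of_level_neg hK hf, fun f => inAW_zero_iff, ?_, ?_⟩
  · intro f g hf hg
    obtain ⟨x, rfl⟩ := inAW_zero_iff_exists_eq_ofLaurent.1 hf
    obtain ⟨y, rfl⟩ := inAW_zero_iff_exists_eq_ofLaurent.1 hg
    exact inAW_zero_iff_exists_eq_ofLaurent.2 ⟨x * y, conv_ofLaurent x y⟩
  · intro f hf hf0
    obtain ⟨x, rfl⟩ := inAW_zero_iff_exists_eq_ofLaurent.1 hf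
    have hx : x ≠ 0 := by
      rintro rfl
      exact hf0 (funext fun v => by simp [ofLaurent])
    refine ⟨ofLaurent x⁻¹, inAW_zero_iff_exists_eq_ofLaurent.2 ⟨_, rfl⟩, ?_⟩
    rw [conv_ofLaurent, mul_inv_cancel₀ hx, ofLaurent_one]
end

section
/- Let Y ∈ ĝ_α be a root vector for a negative root α of affine sl2, θ̂ the Chevalley involution, X = Y + θ̂(Y), and a ∈ H_reg with α(a) ∉ {0, ±1}. Then in U(ĝ): Y θ̂(Y) = −α(a)²/(1−α(a)²) · [Y, θ̂(Y)] + α(a)(1+α(a)²)/(1−α(a)²)² · X^a X − α(a)²/(1−α(a)²)² · ((X^a)² + X²), where X^a = Ad(a^{−1})X = α(a)^{−1}Y + α(a)θ̂(Y). -/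
/-- The identity `Y θ̂(Y) = −α(a)²/(1−α(a)²)·[Y,θ̂(Y)] + α(a)(1+α(a)²)/(1−α(a)²)²·XᵃX
− α(a)²/(1−α(a)²)²·((Xᵃ)² + X²)` in `U(ĝ)`, stated as an identity in an arbitrary
associative `ℂ`-algebra (e.g. the universal enveloping algebra), with `Z = θ̂(Y)`,
`X = Y + Z`, `Xᵃ = Ad(a⁻¹)X = q⁻¹Y + qZ` and `q = α(a)` a nonzero scalar with `q² ≠ 1`. -/
theorem radial_part_identity {A : Type*} [Ring A] [Algebra ℂ A]
    (Y Z : A) (q : ℂ) (hq : q ≠ 0) (hq2 : q ^ 2 ≠ 1)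
    (X Xa : A) (hX : X = Y + Z) (hXa : Xa = q⁻¹ • Y + q • Z) :
    Y * Z = (-q ^ 2 / (1 - q ^ 2)) • (Y * Z - Z * Y)
        + (q * (1 + q ^ 2) / (1 - q ^ 2) ^ 2) • (Xa * X)
        - (q ^ 2 / (1 - q ^ 2) ^ 2) • (Xa * Xa + X * X) := by
  subst hX hXa
  have h1 : (1:ℂ) - q ^ 2 ≠ 0 := by intro h; apply hq2; linear_combination -h
  have hinj := smul_right_injective A (pow_ne_zero 2 h1)
  apply hinj
  have e1 : (1 - q ^ 2) ^ 2 * (-q ^ 2 / (1 - q ^ 2)) = -q ^ 2 * (1 - q ^ 2) := by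
    field_simp
  have e2 : (1 - q ^ 2) ^ 2 * (q * (1 + q ^ 2) / (1 - q ^ 2) ^ 2) = q * (1 + q ^ 2) := by
    field_simp
  have e3 : (1 - q ^ 2) ^ 2 * (q ^ 2 / (1 - q ^ 2) ^ 2) = q ^ 2 := by
    field_simp
  have e4 : (1 - q ^ 2) ^ 2 * q⁻¹ = q⁻¹ * (1 - q ^ 2) ^ 2 := mul_comm _ _
  simp only [smul_add, smul_sub, smul_smul, e1, e2, e3]
  have hq1 : q⁻¹ * q = 1 := inv_mul_cancel₀ hq
  simp only [mul_add, add_mul, smul_mul_assoc, mul_smul_comm, smul_smul, smul_sub, smul_add]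
  match_scalars <;> field_simp <;> ring
end

section
/- With q = e^{πiτ}, y = e^{2πiz}, the Weierstrass-type functions defined by ℘_{i,j}(z,τ) = (θ'_{i,j}/θ_{i,j})'(z,τ) satisfy as q-series identities: 4℘_{0,1}(y²,q²) = ℘_{0,1}(y,q) + ℘_{0,0}(y,q), 4℘_{1,1}(y²,q²) = ℘_{1,1}(y,q) + ℘_{1,0}(y,q), and ℘_{1,1}(y²,q) = ℘_{0,1}(y²,q²) + ℘_{1,1}(y²,q²), where ℘_{0,0}(y,q) = −4π² Σ_{m≥0}( q^{2m+1}y^{−1}/(1+q^{2m+1}y^{−1})² + q^{2m+1}y/(1+q^{2m+1}y)² ), ℘_{0,1}(y,q) = 4π² Σ_{m≥0}( q^{2m+1}y^{−1}/(1−q^{2m+1}y^{−1})² + q^{2m+1}y/(1−q^{2m+1}y)² ), ℘_{1,0}(y,q) = −4π²( y^{−1}/(1+y^{−1})² + Σ_{m≥1}( q^{2m}y^{−1}/(1+q^{2m}y^{−1})² + q^{2m}y/(1+q^{2m}y)² ) ), ℘_{1,1}(y,q) = 4π²( y^{−1}/(1−y^{−1})² + Σ_{m≥1}( q^{2m}y^{−1}/(1−q^{2m}y^{−1})²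 + q^{2m}y/(1−q^{2m}y)² ) ). -/
open Real

/-- `℘₀₀(y,q) = −4π² Σ_{m≥0} ( q^{2m+1}y⁻¹/(1+q^{2m+1}y⁻¹)² + q^{2m+1}y/(1+q^{2m+1}y)² )`. -/
noncomputable def P00 (y q : ℂ) : ℂ :=
  -4 * (π : ℂ) ^ 2 * ∑' m : ℕ,
    (q ^ (2 * m + 1) * y⁻¹ / (1 + q ^ (2 * m + 1) * y⁻¹) ^ 2
      + q ^ (2 * m + 1) * y / (1 + q ^ (2 * m + 1) * y) ^ 2)

/-- `℘₀₁(y,q) = 4π² Σ_{m≥0} ( q^{2m+1}y⁻¹/(1−q^{2m+1}y⁻¹)² + q^{2m+1}y/(1−q^{2m+1}y)² )`. -/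
noncomputable def P01 (y q : ℂ) : ℂ :=
  4 * (π : ℂ) ^ 2 * ∑' m : ℕ,
    (q ^ (2 * m + 1) * y⁻¹ / (1 - q ^ (2 * m + 1) * y⁻¹) ^ 2
      + q ^ (2 * m + 1) * y / (1 - q ^ (2 * m + 1) * y) ^ 2)

/-- `℘₁₀(y,q) = −4π²( y⁻¹/(1+y⁻¹)² + Σ_{m≥1} ( q^{2m}y⁻¹/(1+q^{2m}y⁻¹)² + q^{2m}y/(1+q^{2m}y)² ) )`. -/
noncomputable def P10 (y q : ℂ) : ℂ :=
  -4 * (π : ℂ) ^ 2 * (y⁻¹ / (1 + y⁻¹) ^ 2 + ∑' m : ℕ,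
    (q ^ (2 * (m + 1)) * y⁻¹ / (1 + q ^ (2 * (m + 1)) * y⁻¹) ^ 2
      + q ^ (2 * (m + 1)) * y / (1 + q ^ (2 * (m + 1)) * y) ^ 2))

/-- `℘₁₁(y,q) = 4π²( y⁻¹/(1−y⁻¹)² + Σ_{m≥1} ( q^{2m}y⁻¹/(1−q^{2m}y⁻¹)² + q^{2m}y/(1−q^{2m}y)² ) )`. -/
noncomputable def P11 (y q : ℂ) : ℂ :=
  4 * (π : ℂ) ^ 2 * (y⁻¹ / (1 - y⁻¹) ^ 2 + ∑' m : ℕ,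
    (q ^ (2 * (m + 1)) * y⁻¹ / (1 - q ^ (2 * (m + 1)) * y⁻¹) ^ 2
      + q ^ (2 * (m + 1)) * y / (1 - q ^ (2 * (m + 1)) * y) ^ 2))

/-!
Everything rests on the termwise identity `w/(1-w)² - w/(1+w)² = 4 w²/(1-w²)²`: subtracting
the `+`-series from the `−`-series squares both `q` and `y`, which gives the first two
identities. The third one splits the sum over `m ≥ 1` of `℘₁₁(y², q)` into odd and even `m`,
i.e. into the series of `℘₀₁(y², q²)` and of `℘₁₁(y², q²)`.
-/

open Filter

theorem div_one_sub_sq_sub_div_one_add_sq {K : Type*} [Field K] {w : K}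
    (h₁ : 1 - w ≠ 0) (h₂ : 1 + w ≠ 0) :
    w / (1 - w) ^ 2 - w / (1 + w) ^ 2 = 4 * (w ^ 2 / (1 - w ^ 2) ^ 2) := by
  have h : 1 - w ^ 2 ≠ 0 := by
    rw [show 1 - w ^ 2 = (1 - w) * (1 + w) by ring]
    exact mul_ne_zero h₁ h₂
  field_simp
  ring

/-- The summand of `℘₀₁` and `℘₁₁` at the power `x` of `q`. -/
def wpTermSub {K : Type*} [Field K] (x y : K) : K :=
  x * y⁻¹ / (1 - x * y⁻¹) ^ 2 + x * y / (1 - x * y) ^ 2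

/-- The summand of `℘₀₀` and `℘₁₀` at the power `x` of `q`. -/
def wpTermAdd {K : Type*} [Field K] (x y : K) : K :=
  x * y⁻¹ / (1 + x * y⁻¹) ^ 2 + x * y / (1 + x * y) ^ 2

theorem wpTermSub_sub_wpTermAdd {K : Type*} [Field K] {x y : K}
    (h₁ : 1 - x * y ≠ 0) (h₂ : 1 + x * y ≠ 0) (h₃ : 1 - x * y⁻¹ ≠ 0) (h₄ : 1 + x * y⁻¹ ≠ 0) :
    wpTermSub x y - wpTermAdd x y = 4 * wpTermSub (x ^ 2) (y ^ 2) := by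
  have hinv := div_one_sub_sq_sub_div_one_add_sq h₃ h₄
  have hmul := div_one_sub_sq_sub_div_one_add_sq h₁ h₂
  rw [mul_pow, inv_pow] at hinv
  rw [mul_pow] at hmul
  unfold wpTermSub wpTermAdd
  linear_combination hinv + hmul

section Series

variable {𝕜 : Type*} [NormedField 𝕜] {q : 𝕜}

theorem summable_norm_pow_mul (hq : ‖q‖ < 1) {e : ℕ → ℕ} (he : ∀ n, n ≤ e n) (c : 𝕜) :
    Summable fun n => ‖q ^ e n * c‖ := by
  refine Summable.of_nonneg_of_le (fun n => norm_nonneg _) (fun n => ?_)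
    ((summable_geometric_of_lt_one (norm_nonneg q) hq).mul_right ‖c‖)
  rw [norm_mul, norm_pow]
  exact mul_le_mul_of_nonneg_right (pow_le_pow_of_le_one (norm_nonneg q) hq.le (he n))
    (norm_nonneg c)

variable [CompleteSpace 𝕜]

theorem summable_div_one_sub_sq {w : ℕ → 𝕜} (hw : Summable fun n => ‖w n‖) :
    Summable fun n => w n / (1 - w n) ^ 2 := by
  have hsmall : ∀ᶠ n in atTop, ‖w n‖ ≤ 1 / 2 :=
    hw.tendsto_atTop_zero.eventually_le_const (by norm_num)
  refine Summable.of_norm_bounded_eventually_nat (hw.mul_left 4) ?_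
  filter_upwards [hsmall] with n hn
  have hden : 1 / 2 ≤ ‖1 - w n‖ := by
    have := norm_sub_norm_le (1 : 𝕜) (w n)
    rw [norm_one] at this
    linarith
  have hden_sq : 1 / 4 ≤ ‖1 - w n‖ ^ 2 := by nlinarith
  rw [norm_div, norm_pow, div_le_iff₀ (by positivity)]
  nlinarith [norm_nonneg (w n)]

theorem summable_div_one_add_sq {w : ℕ → 𝕜} (hw : Summable fun n => ‖w n‖) :
    Summable fun n => w n / (1 + w n) ^ 2 := by
  have h := (summable_div_one_sub_sq (w := fun n => -w n) (by simpa using hw)).neg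
  refine h.congr fun n => ?_
  rw [sub_neg_eq_add, neg_div, neg_neg]

theorem summable_wpTermSub (hq : ‖q‖ < 1) {e : ℕ → ℕ} (he : ∀ n, n ≤ e n) (y : 𝕜) :
    Summable fun n => wpTermSub (q ^ e n) y :=
  (summable_div_one_sub_sq (summable_norm_pow_mul hq he y⁻¹)).add
    (summable_div_one_sub_sq (summable_norm_pow_mul hq he y))

theorem summable_wpTermAdd (hq : ‖q‖ < 1) {e : ℕ → ℕ} (he : ∀ n, n ≤ e n) (y : 𝕜) :
    Summable fun n => wpTermAdd (q ^ e n) y :=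
  (summable_div_one_add_sq (summable_norm_pow_mul hq he y⁻¹)).add
    (summable_div_one_add_sq (summable_norm_pow_mul hq he y))

theorem tsum_wpTermSub_sub_tsum_wpTermAdd (hq : ‖q‖ < 1) {e : ℕ → ℕ} (he : ∀ n, n < e n)
    {y : 𝕜} (h₁ : ∀ m : ℕ, 1 - q ^ (m + 1) * y ≠ 0) (h₂ : ∀ m : ℕ, 1 + q ^ (m + 1) * y ≠ 0)
    (h₃ : ∀ m : ℕ, 1 - q ^ (m + 1) * y⁻¹ ≠ 0) (h₄ : ∀ m : ℕ, 1 + q ^ (m + 1) * y⁻¹ ≠ 0) :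
    ∑' n, wpTermSub (q ^ e n) y - ∑' n, wpTermAdd (q ^ e n) y
      = 4 * ∑' n, wpTermSub ((q ^ 2) ^ e n) (y ^ 2) := by
  have he' : ∀ n, n ≤ e n := fun n => (he n).le
  rw [← (summable_wpTermSub hq he' y).tsum_sub (summable_wpTermAdd hq he' y), ← tsum_mul_left]
  refine tsum_congr fun n => ?_
  obtain ⟨k, hk⟩ := Nat.exists_eq_add_of_lt (he n)
  rw [pow_right_comm, hk]
  exact wpTermSub_sub_wpTermAdd (h₁ (n + k)) (h₂ (n + k)) (h₃ (n + k)) (h₄ (n + k))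

theorem tsum_wpTermSub_even_add_odd (hq : ‖q‖ < 1) (y : 𝕜) :
    ∑' m : ℕ, wpTermSub (q ^ (2 * (m + 1))) y
      = ∑' m : ℕ, wpTermSub ((q ^ 2) ^ (2 * m + 1)) y
        + ∑' m : ℕ, wpTermSub ((q ^ 2) ^ (2 * (m + 1))) y := by
  simp only [← pow_mul]
  rw [← tsum_even_add_odd (f := fun m => wpTermSub (q ^ (2 * (m + 1))) y)
    (summable_wpTermSub hq (fun k => by omega) y) (summable_wpTermSub hq (fun k => by omega) y)]
  ring_nf

end Series

theorem P00_eq (y q : ℂ) : P00 y q = -4 * (π : ℂ) ^ 2 * ∑' m : ℕ, wpTermAdd (q ^ (2 * m + 1)) y :=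
  rfl

theorem P01_eq (y q : ℂ) : P01 y q = 4 * (π : ℂ) ^ 2 * ∑' m : ℕ, wpTermSub (q ^ (2 * m + 1)) y :=
  rfl

theorem P10_eq (y q : ℂ) :
    P10 y q = -4 * (π : ℂ) ^ 2 *
      (y⁻¹ / (1 + y⁻¹) ^ 2 + ∑' m : ℕ, wpTermAdd (q ^ (2 * (m + 1))) y) :=
  rfl

theorem P11_eq (y q : ℂ) :
    P11 y q = 4 * (π : ℂ) ^ 2 *
      (y⁻¹ / (1 - y⁻¹) ^ 2 + ∑' m : ℕ, wpTermSub (q ^ (2 * (m + 1))) y) :=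
  rfl

theorem wp_halving_identities_general (y q : ℂ) (hq : ‖q‖ < 1)
    (h1 : ∀ m : ℕ, 1 - q ^ (m + 1) * y ≠ 0) (h2 : ∀ m : ℕ, 1 + q ^ (m + 1) * y ≠ 0)
    (h3 : ∀ m : ℕ, 1 - q ^ (m + 1) * y⁻¹ ≠ 0) (h4 : ∀ m : ℕ, 1 + q ^ (m + 1) * y⁻¹ ≠ 0)
    (h5 : 1 - y⁻¹ ≠ 0) (h6 : 1 + y⁻¹ ≠ 0) :
    4 * P01 (y ^ 2) (q ^ 2) = P01 y q + P00 y q ∧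
    4 * P11 (y ^ 2) (q ^ 2) = P11 y q + P10 y q ∧
    P11 (y ^ 2) q = P01 (y ^ 2) (q ^ 2) + P11 (y ^ 2) (q ^ 2) := by
  refine ⟨?_, ?_, ?_⟩
  · have hodd := tsum_wpTermSub_sub_tsum_wpTermAdd hq (e := fun m => 2 * m + 1)
      (fun n => by omega) h1 h2 h3 h4
    rw [P01_eq, P01_eq, P00_eq]
    linear_combination (-4 * (π : ℂ) ^ 2) * hodd
  · have heven := tsum_wpTermSub_sub_tsum_wpTermAdd hq (e := fun m => 2 * (m + 1))
      (fun n => by omega) h1 h2 h3 h4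
    have hconst := div_one_sub_sq_sub_div_one_add_sq h5 h6
    rw [inv_pow] at hconst
    rw [P11_eq, P11_eq, P10_eq]
    linear_combination (-4 * (π : ℂ) ^ 2) * (heven + hconst)
  · rw [P11_eq, P11_eq, P01_eq, tsum_wpTermSub_even_add_odd hq]
    ring

/-- The halving identities for the theta-derived Weierstrass functions:
`4℘₀₁(y²,q²) = ℘₀₁(y,q) + ℘₀₀(y,q)`, `4℘₁₁(y²,q²) = ℘₁₁(y,q) + ℘₁₀(y,q)`,
`℘₁₁(y²,q) = ℘₀₁(y²,q²) + ℘₁₁(y²,q²)`. -/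
theorem wp_halving_identities (y q : ℂ) (hq : ‖q‖ < 1) (hy : y ≠ 0)
    (h1 : ∀ m : ℕ, 1 - q ^ (m + 1) * y ≠ 0) (h2 : ∀ m : ℕ, 1 + q ^ (m + 1) * y ≠ 0)
    (h3 : ∀ m : ℕ, 1 - q ^ (m + 1) * y⁻¹ ≠ 0) (h4 : ∀ m : ℕ, 1 + q ^ (m + 1) * y⁻¹ ≠ 0)
    (h5 : 1 - y⁻¹ ≠ 0) (h6 : 1 + y⁻¹ ≠ 0) :
    4 * P01 (y ^ 2) (q ^ 2) = P01 y q + P00 y q ∧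
    4 * P11 (y ^ 2) (q ^ 2) = P11 y q + P10 y q ∧
    P11 (y ^ 2) q = P01 (y ^ 2) (q ^ 2) + P11 (y ^ 2) (q ^ 2) :=
  wp_halving_identities_general y q hq h1 h2 h3 h4 h5 h6
end
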